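/- arXiv:1807.03292 — 4 statements merged into one kernel-verified Lean document; each statement's English description precedes it below -/
import Mathlib

section
/- (Identifiability of the linear coefficient in the additive index model.) Let X be a real-valued random variable and V an ℝᵈ-valued random variable on a probability space (Ω, F, P), and suppose X is not almost surely equal to h(V) for any Borel-measurable function h : ℝᵈ → ℝ. If β₁, β₁' are real numbers and f, g : ℝᵈ → ℝ are Borel-measurable functions such that β₁·X + f(V) = β₁'·X + g(V) almost surely, then β₁ = β₁' and f(V) = g(V) almost surely. -/
open MeasureTheory

/-- Identifiability of the linear coefficient in the additive index model: if `X` is not almost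
surely a Borel-measurable function of `V`, and `β₁·X + f(V) = β₁'·X + g(V)` almost surely for
Borel-measurable `f, g`, then `β₁ = β₁'` and `f(V) = g(V)` almost surely. -/
theorem stmt_8 {Ω : Type*} [MeasurableSpace Ω] (μ : Measure Ω) [IsProbabilityMeasure μ] {d : ℕ}
    (X : Ω → ℝ) (V : Ω → (Fin d → ℝ)) (hXm : Measurable X) (hVm : Measurable V)
    (hnot : ¬ ∃ h : (Fin d → ℝ) → ℝ, Measurable h ∧ X =ᵐ[μ] fun ω => h (V ω))
    (β₁ β₁' : ℝ) (f g : (Fin d → ℝ) → ℝ) (hf : Measurable f) (hg : Measurable g)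
    (heq : (fun ω => β₁ * X ω + f (V ω)) =ᵐ[μ] fun ω => β₁' * X ω + g (V ω)) :
    β₁ = β₁' ∧ (fun ω => f (V ω)) =ᵐ[μ] fun ω => g (V ω) := by
  have hb : β₁ = β₁' := by
    by_contra hne
    apply hnot
    refine ⟨fun v => (g v - f v) / (β₁ - β₁'), (hg.sub hf).div_const _, ?_⟩
    filter_upwards [heq] with ω hω
    have hsub : β₁ - β₁' ≠ 0 := sub_ne_zero.mpr hne
    field_simp
    linarith
  refine ⟨hb, ?_⟩
  filter_upwards [heq] with ω hω
  rw [hb] at hω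
  linarith
end

section
/- (Theorem 1, identification form.) Let (Ω, F, P) be a probability space on a standard Borel space, let X be a real-valued integrable random variable, V an ℝᵈ-valued random variable, and ε₀, ε₁ integrable real-valued random variables such that the pair (ε₀, ε₁) is conditionally independent of X given σ(V). Let Y = β₀ + β₁·X + ε₀ + ε₁ for real constants β₀, β₁. Suppose X is not almost surely equal to h(V) for any Borel-measurable function h : ℝᵈ → ℝ. Then β₁ is identified: for any real constants β₀', β₁' and any Borel-measurable g : ℝᵈ → ℝ such that E[Y | σ(X, V)] = β₀' + β₁'·X + g(V) almost surely, necessarily β₁' = β₁. -/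
/-!
Write `ε = ε₀ + ε₁`. Conditional independence of `ε` and `X` given `σ(V)` gives
`E[ε | σ(V) ⊔ σ(X)] = E[ε | σ(V)]`, and by Doob–Dynkin the right-hand side is `h(V)` for a Borel
`h`. Hence `E[Y | σ(X, V)] = β₀ + β₁ X + h(V)`; if this also equals `β₀' + β₁' X + g(V)` with
`β₁' ≠ β₁`, solving for `X` exhibits it as a Borel function of `V`, a contradiction.

The conditional-expectation identity is checked on the π-system of sets `a ∩ t` with `a ∈ σ(V)`,
`t ∈ σ(X)`. For `ε` an indicator `1_s` it reads `∫_a P[s|σ(V)] P[t|σ(V)] = P(a ∩ s ∩ t)`, which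
is the defining product rule of conditional independence; an L¹ induction does the rest.
-/

open MeasureTheory ProbabilityTheory

section CondExp

variable {Ω : Type*} {m m₁ m₂ mΩ : MeasurableSpace Ω} {μ : Measure Ω}

theorem MeasurableSpace.sup_eq_generateFrom_image2_inter (m₁ m₂ : MeasurableSpace Ω) :
    m₁ ⊔ m₂ = MeasurableSpace.generateFrom
      (Set.image2 (· ∩ ·) {s | MeasurableSet[m₁] s} {t | MeasurableSet[m₂] t}) := by
  refine le_antisymm (sup_le ?_ ?_) (MeasurableSpace.generateFrom_le ?_)
  · exact fun s hs ↦ MeasurableSpace.measurableSet_generateFrom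
      ⟨s, hs, Set.univ, MeasurableSet.univ, Set.inter_univ s⟩
  · exact fun t ht ↦ MeasurableSpace.measurableSet_generateFrom
      ⟨Set.univ, MeasurableSet.univ, t, ht, Set.univ_inter t⟩
  · rintro _ ⟨s, hs, t, ht, rfl⟩
    exact (le_sup_left (b := m₂) s hs).inter (le_sup_right (a := m₁) t ht)

theorem isPiSystem_image2_inter (m₁ m₂ : MeasurableSpace Ω) :
    IsPiSystem (Set.image2 (· ∩ ·) {s | MeasurableSet[m₁] s} {t | MeasurableSet[m₂] t}) := by
  rintro _ ⟨s, hs, t, ht, rfl⟩ _ ⟨s', hs', t', ht', rfl⟩ -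
  exact ⟨s ∩ s', hs.inter hs', t ∩ t', ht.inter ht', Set.inter_inter_inter_comm s s' t t'⟩

theorem setIntegral_eq_of_isPiSystem {m' : MeasurableSpace Ω} (hm' : m' ≤ mΩ)
    {C : Set (Set Ω)} (hgen : m' = MeasurableSpace.generateFrom C) (hC : IsPiSystem C)
    {f g : Ω → ℝ} (hf : Integrable f μ) (hg : Integrable g μ)
    (h_univ : ∫ x, f x ∂μ = ∫ x, g x ∂μ) (h_C : ∀ s ∈ C, ∫ x in s, f x ∂μ = ∫ x in s, g x ∂μ)
    {s : Set Ω} (hs : MeasurableSet[m'] s) :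
    ∫ x in s, f x ∂μ = ∫ x in s, g x ∂μ := by
  induction s, hs using MeasurableSpace.induction_on_inter hgen hC with
  | empty => simp
  | basic s hs => exact h_C s hs
  | compl s hs ih =>
    have hf_split := integral_add_compl (hm' s hs) hf
    have hg_split := integral_add_compl (hm' s hs) hg
    linarith
  | iUnion s hdisj hs ih =>
    rw [integral_iUnion (fun i ↦ hm' _ (hs i)) hdisj hf.integrableOn,
      integral_iUnion (fun i ↦ hm' _ (hs i)) hdisj hg.integrableOn]
    exact tsum_congr ih

theorem continuous_setIntegral_condExp (hm : m ≤ mΩ) [SigmaFinite (μ.trim hm)] (s : Set Ω) :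
    Continuous fun f : Lp ℝ 1 μ ↦ ∫ x in s, μ[f | m] x ∂μ := by
  convert (continuous_setIntegral s).comp (condExpL1CLM ℝ hm μ).continuous using 1
  ext f
  refine integral_congr_ae (ae_restrict_of_ae ?_)
  have h := condExp_ae_eq_condExpL1CLM hm (L1.integrable_coeFn f)
  rwa [Integrable.toL1_coeFn] at h

variable [IsFiniteMeasure μ]

theorem setIntegral_inter_eq_setIntegral_mul_condExp (hm : m ≤ mΩ) {u : Ω → ℝ}
    (hu : StronglyMeasurable[m] u) (hui : Integrable u μ) {a t : Set Ω}
    (ha : MeasurableSet[m] a) (ht : MeasurableSet t) :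
    ∫ x in a ∩ t, u x ∂μ = ∫ x in a, u x * (μ⟦t | m⟧) x ∂μ := by
  have hut : u * t.indicator (fun _ ↦ 1) = t.indicator u := by
    ext x; by_cases hx : x ∈ t <;> simp [hx]
  have h_pull : μ[t.indicator u | m] =ᵐ[μ] u * μ⟦t | m⟧ := by
    rw [← hut]
    exact condExp_mul_of_stronglyMeasurable_left hu (hut ▸ hui.indicator ht)
      ((integrable_const 1).indicator ht)
  calc ∫ x in a ∩ t, u x ∂μ = ∫ x in a, t.indicator u x ∂μ := (setIntegral_indicator ht).symm
    _ = ∫ x in a, μ[t.indicator u | m] x ∂μ :=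
        (setIntegral_condExp hm (hui.indicator ht) ha).symm
    _ = ∫ x in a, u x * (μ⟦t | m⟧) x ∂μ :=
        setIntegral_congr_ae (hm a ha) (h_pull.mono fun x hx _ ↦ hx)

section CondIndep

variable [StandardBorelSpace Ω]

theorem setIntegral_inter_condExp_indicator_of_condIndep (hm : m ≤ mΩ) (hm₁ : m₁ ≤ mΩ)
    (hm₂ : m₂ ≤ mΩ) (hind : CondIndep m m₁ m₂ hm μ) {s a t : Set Ω} (hs : MeasurableSet[m₁] s)
    (ha : MeasurableSet[m] a) (ht : MeasurableSet[m₂] t) :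
    ∫ x in a ∩ t, (μ⟦s | m⟧) x ∂μ = ∫ x in a ∩ t, s.indicator (fun _ ↦ (1 : ℝ)) x ∂μ := by
  have h_prod := (condIndep_iff m m₁ m₂ hm hm₁ hm₂ μ).1 hind s t hs ht
  calc ∫ x in a ∩ t, (μ⟦s | m⟧) x ∂μ = ∫ x in a, (μ⟦s | m⟧) x * (μ⟦t | m⟧) x ∂μ :=
        setIntegral_inter_eq_setIntegral_mul_condExp hm stronglyMeasurable_condExp
          integrable_condExp ha (hm₂ t ht)
    _ = ∫ x in a, (μ⟦s ∩ t | m⟧) x ∂μ :=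
        setIntegral_congr_ae (hm a ha) (h_prod.mono fun x hx _ ↦ hx.symm)
    _ = ∫ x in a, (s ∩ t).indicator (fun _ ↦ (1 : ℝ)) x ∂μ :=
        setIntegral_condExp hm ((integrable_const _).indicator ((hm₁ s hs).inter (hm₂ t ht))) ha
    _ = ∫ x in a ∩ t, s.indicator (fun _ ↦ (1 : ℝ)) x ∂μ := by
        rw [Set.inter_comm s t, ← Set.indicator_indicator, setIntegral_indicator (hm₂ t ht)]

theorem setIntegral_inter_condExp_of_condIndep (hm : m ≤ mΩ) (hm₁ : m₁ ≤ mΩ) (hm₂ : m₂ ≤ mΩ)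
    (hind : CondIndep m m₁ m₂ hm μ) {f : Ω → ℝ} (hf : StronglyMeasurable[m₁] f)
    (hfi : Integrable f μ) {a t : Set Ω} (ha : MeasurableSet[m] a) (ht : MeasurableSet[m₂] t) :
    ∫ x in a ∩ t, μ[f | m] x ∂μ = ∫ x in a ∩ t, f x ∂μ := by
  have hat : MeasurableSet (a ∩ t) := (hm a ha).inter (hm₂ t ht)
  refine MemLp.induction_stronglyMeasurable hm₁ ENNReal.one_ne_top
    (fun f ↦ ∫ x in a ∩ t, μ[f | m] x ∂μ = ∫ x in a ∩ t, f x ∂μ) ?_ ?_ ?_ ?_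
    (memLp_one_iff_integrable.2 hfi) hf.aestronglyMeasurable
  · intro c s hs _
    have hcs : s.indicator (fun _ ↦ c) = c • s.indicator (fun _ ↦ (1 : ℝ)) := by
      ext x; by_cases hx : x ∈ s <;> simp [hx]
    rw [hcs, setIntegral_congr_ae hat ((condExp_smul c _ m).mono fun x hx _ ↦ hx)]
    simp only [Pi.smul_apply, integral_smul,
      setIntegral_inter_condExp_indicator_of_condIndep hm hm₁ hm₂ hind hs ha ht]
  · intro f g _ hf hg _ _ hPf hPg
    rw [memLp_one_iff_integrable] at hf hg
    rw [setIntegral_congr_ae hat ((condExp_add hf hg m).mono fun x hx _ ↦ hx)]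
    simp only [Pi.add_apply]
    rw [integral_add integrable_condExp.integrableOn integrable_condExp.integrableOn,
      integral_add hf.integrableOn hg.integrableOn, hPf, hPg]
  · exact isClosed_eq ((continuous_setIntegral_condExp hm _).comp continuous_subtype_val)
      ((continuous_setIntegral _).comp continuous_subtype_val)
  · intro f g hfg _ hPf
    rwa [integral_congr_ae (ae_restrict_of_ae hfg.symm),
      integral_congr_ae (ae_restrict_of_ae (condExp_congr_ae hfg.symm))]

theorem condExp_sup_ae_eq_condExp_of_condIndep (hm : m ≤ mΩ) (hm₁ : m₁ ≤ mΩ) (hm₂ : m₂ ≤ mΩ)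
    (hind : CondIndep m m₁ m₂ hm μ) {f : Ω → ℝ} (hf : StronglyMeasurable[m₁] f)
    (hfi : Integrable f μ) :
    μ[f | m ⊔ m₂] =ᵐ[μ] μ[f | m] := by
  refine (ae_eq_condExp_of_forall_setIntegral_eq (sup_le hm hm₂) hfi
    (fun _ _ _ ↦ integrable_condExp.integrableOn) (fun s hs _ ↦ ?_)
    (stronglyMeasurable_condExp.mono (le_sup_left : m ≤ m ⊔ m₂)).aestronglyMeasurable).symm
  refine setIntegral_eq_of_isPiSystem (sup_le hm hm₂)
    (MeasurableSpace.sup_eq_generateFrom_image2_inter m m₂) (isPiSystem_image2_inter m m₂)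
    integrable_condExp hfi (integral_condExp hm) ?_ hs
  rintro _ ⟨a, ha, t, ht, rfl⟩
  exact setIntegral_inter_condExp_of_condIndep hm hm₁ hm₂ hind hf hfi ha ht

end CondIndep

end CondExp

theorem coeff_eq_of_ae_eq_of_not_exists_ae_eq_comp {Ω E : Type*} {mΩ : MeasurableSpace Ω}
    [MeasurableSpace E] {μ : Measure Ω} {X : Ω → ℝ} {V : Ω → E}
    (hX : ¬ ∃ h : E → ℝ, Measurable h ∧ X =ᵐ[μ] fun ω ↦ h (V ω))
    {a b a' b' : ℝ} {g g' : E → ℝ} (hg : Measurable g) (hg' : Measurable g')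
    (h_eq : (fun ω ↦ a + b * X ω + g (V ω)) =ᵐ[μ] fun ω ↦ a' + b' * X ω + g' (V ω)) :
    b' = b := by
  by_contra hne
  have hδ : b' - b ≠ 0 := sub_ne_zero.2 hne
  refine hX ⟨fun v ↦ (a - a' + g v - g' v) / (b' - b),
    ((measurable_const.add hg).sub hg').div_const _, ?_⟩
  filter_upwards [h_eq] with ω hω
  field_simp
  linarith

/-- Theorem 1 (identification form): in the simple scenario with `(ε₀, ε₁)` conditionally
independent of `X` given `σ(V)`, `Y = β₀ + β₁·X + ε₀ + ε₁`, and `X` not almost surely a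
Borel-measurable function of `V`, the search ad ROAS `β₁` is identified: any additive
representation `E[Y | σ(X, V)] = β₀' + β₁'·X + g(V)` a.s. forces `β₁' = β₁`. -/
theorem stmt_9 {Ω : Type*} {mΩ : MeasurableSpace Ω} [StandardBorelSpace Ω]
    (μ : Measure Ω) [IsProbabilityMeasure μ] {d : ℕ}
    (X : Ω → ℝ) (V : Ω → (Fin d → ℝ)) (ε₀ ε₁ : Ω → ℝ)
    (hXm : Measurable X) (hVm : Measurable V) (hε₀m : Measurable ε₀) (hε₁m : Measurable ε₁)
    (hXint : Integrable X μ) (hε₀int : Integrable ε₀ μ) (hε₁int : Integrable ε₁ μ)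
    (hCI : CondIndepFun (MeasurableSpace.comap V inferInstance) hVm.comap_le
      (fun ω => (ε₀ ω, ε₁ ω)) X μ)
    (β₀ β₁ : ℝ) (Y : Ω → ℝ) (hY : ∀ ω, Y ω = β₀ + β₁ * X ω + ε₀ ω + ε₁ ω)
    (hnot : ¬ ∃ h : (Fin d → ℝ) → ℝ, Measurable h ∧ X =ᵐ[μ] fun ω => h (V ω)) :
    ∀ (β₀' β₁' : ℝ) (g : (Fin d → ℝ) → ℝ), Measurable g →
      (μ[Y | MeasurableSpace.comap (fun ω => (X ω, V ω)) inferInstance] =ᵐ[μ]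
        fun ω => β₀' + β₁' * X ω + g (V ω)) →
      β₁' = β₁ := by
  intro β₀' β₁' g hg hrep
  set mV : MeasurableSpace Ω := MeasurableSpace.comap V inferInstance
  set mXV : MeasurableSpace Ω := MeasurableSpace.comap (fun ω => (X ω, V ω)) inferInstance
  have hmXV : mXV = mV ⊔ MeasurableSpace.comap X inferInstance :=
    (MeasurableSpace.comap_prodMk X V).trans (sup_comm _ _)
  have hε : StronglyMeasurable[MeasurableSpace.comap (fun ω => (ε₀ ω, ε₁ ω)) inferInstance]
      (fun ω => ε₀ ω + ε₁ ω) :=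
    (measurable_fst.add measurable_snd).stronglyMeasurable.comp_measurable (comap_measurable _)
  have hεint : Integrable (fun ω => ε₀ ω + ε₁ ω) μ := hε₀int.add hε₁int
  obtain ⟨h, hh, hεV⟩ := (stronglyMeasurable_condExp (f := fun ω => ε₀ ω + ε₁ ω) (m := mV)
    (μ := μ)).exists_eq_measurable_comp
  have hε_XV : μ[fun ω => ε₀ ω + ε₁ ω | mXV] =ᵐ[μ] fun ω => h (V ω) := by
    rw [hmXV, ← Function.comp_def h V, ← hεV]
    exact condExp_sup_ae_eq_condExp_of_condIndep hVm.comap_le (hε₀m.prodMk hε₁m).comap_le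
      hXm.comap_le ((condIndepFun_iff_condIndep _ _ _ _ μ).1 hCI) hε hεint
  have hlin_XV : StronglyMeasurable[mXV] fun ω => β₀ + β₁ * X ω := by
    rw [hmXV]
    exact (stronglyMeasurable_const.add
      ((comap_measurable X).stronglyMeasurable.const_mul β₁)).mono le_sup_right
  have hlin : Integrable (fun ω => β₀ + β₁ * X ω) μ :=
    (integrable_const β₀).add (hXint.const_mul β₁)
  have hY_split : Y = (fun ω => β₀ + β₁ * X ω) + fun ω => ε₀ ω + ε₁ ω := by
    ext ω; simp only [Pi.add_apply, hY ω]; ring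
  have hY_XV : μ[Y | mXV] =ᵐ[μ] fun ω => β₀ + β₁ * X ω + h (V ω) := by
    rw [hY_split]
    filter_upwards [condExp_add hlin hεint mXV, hε_XV] with ω h_add h_ε
    rw [h_add, Pi.add_apply, condExp_of_stronglyMeasurable (hXm.prodMk hVm).comap_le hlin_XV hlin,
      h_ε]
  exact coeff_eq_of_ae_eq_of_not_exists_ae_eq_comp hnot hh.measurable hg (hY_XV.symm.trans hrep)
end

section
/- (Regression identity underlying Theorem 2, part 1, complex scenario.) Let (Ω, F, P) be a probability space on a standard Borel space, let X₁ and X₂ be real-valued integrable random variables, V an ℝᵈ-valued random variable, and ε₀, ε₁, ε₂ integrable real-valued random variables. Assume: ε₁ is conditionally independent of the pair (X₁, X₂) given σ(V); ε₂ is conditionally independent of the pair (X₁, V) given σ(X₂); and ε₀ is conditionally independent of X₁ given σ(V, X₂). Let Y = β₀ + β₁·X₁ + ε₀ + ε₁ + ε₂ for real constants β₀, β₁. Then E[Y | σ(X₁, X₂, V)] = β₀ + β₁·X₁ + E[ε₁ | σ(V)] + E[ε₂ | σ(X₂)] + E[ε₀ | σ(V, X₂)] almost surely. -/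
/-!
If `f` is conditionally independent of `g` given `k`, the conditional distribution of `f` given
`(k, g)` is that given `k` alone, so `E[f | σ(k, g)] = E[f | σ(k)]`. Since
`σ(X₁, X₂, V) = σ(V) ⊔ σ(X₁, X₂) = σ(X₂) ⊔ σ(X₁, V) = σ(V, X₂) ⊔ σ(X₁)`, this applies to each of
`ε₁`, `ε₂`, `ε₀`; the term `β₀ + β₁ X₁` is `σ(X₁, X₂, V)`-measurable, and linearity concludes.
-/

open MeasureTheory ProbabilityTheory

-- `MeasurableSpace.comap_prodMk` in the form that rewrites comaps along `inferInstance`.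
theorem comap_prodMk_eq_sup {Ω β γ : Type*} [MeasurableSpace β] [MeasurableSpace γ]
    (X : Ω → β) (Y : Ω → γ) :
    MeasurableSpace.comap (fun ω => (X ω, Y ω)) inferInstance
      = MeasurableSpace.comap X inferInstance ⊔ MeasurableSpace.comap Y inferInstance :=
  MeasurableSpace.comap_prodMk X Y

theorem condExp_sup_comap_ae_eq_of_condIndepFun {Ω β γ : Type*} {mΩ : MeasurableSpace Ω}
    [StandardBorelSpace Ω] {mβ : MeasurableSpace β} {mγ : MeasurableSpace γ}
    [StandardBorelSpace γ] [Nonempty γ] {μ : Measure Ω} [IsFiniteMeasure μ]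
    {k : Ω → β} {g : Ω → γ} {f : Ω → ℝ} (hk : Measurable k) (hg : Measurable g)
    (hf : Measurable f) (hf_int : Integrable f μ)
    (h : CondIndepFun (mβ.comap k) hk.comap_le f g μ) :
    μ[f | mβ.comap k ⊔ mγ.comap g] =ᵐ[μ] μ[f | mβ.comap k] := by
  have hkg : Measurable fun ω => (k ω, g ω) := hk.prodMk hg
  have hcond := (condIndepFun_iff_condDistrib_prod_ae_eq_prodMkRight hf hg hk).1 h.symm
  rw [← MeasurableSpace.comap_prodMk]
  calc μ[f | (mβ.prod mγ).comap fun ω => (k ω, g ω)]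
      =ᵐ[μ] fun ω => ∫ y, y ∂condDistrib f (fun ω => (k ω, g ω)) μ (k ω, g ω) :=
        condExp_ae_eq_integral_condDistrib' hkg hf_int
    _ =ᵐ[μ] fun ω => ∫ y, y ∂condDistrib f k μ (k ω) := by
        filter_upwards [ae_of_ae_map hkg.aemeasurable hcond] with ω hω
        rw [hω, Kernel.prodMkRight_apply]
    _ =ᵐ[μ] μ[f | mβ.comap k] := (condExp_ae_eq_integral_condDistrib' hk hf_int).symm

theorem stmt_10_general {Ω : Type*} {mΩ : MeasurableSpace Ω} [StandardBorelSpace Ω]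
    (μ : Measure Ω) [IsProbabilityMeasure μ] {d : ℕ}
    (X₁ X₂ : Ω → ℝ) (V : Ω → (Fin d → ℝ)) (ε₀ ε₁ ε₂ : Ω → ℝ)
    (hX₁m : Measurable X₁) (hX₂m : Measurable X₂) (hVm : Measurable V)
    (hε₀m : Measurable ε₀) (hε₁m : Measurable ε₁) (hε₂m : Measurable ε₂)
    (hX₁int : Integrable X₁ μ)
    (hε₀int : Integrable ε₀ μ) (hε₁int : Integrable ε₁ μ) (hε₂int : Integrable ε₂ μ)
    (hCI₁ : CondIndepFun (MeasurableSpace.comap V inferInstance) hVm.comap_le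
      ε₁ (fun ω => (X₁ ω, X₂ ω)) μ)
    (hCI₂ : CondIndepFun (MeasurableSpace.comap X₂ inferInstance) hX₂m.comap_le
      ε₂ (fun ω => (X₁ ω, V ω)) μ)
    (hCI₀ : CondIndepFun
      (MeasurableSpace.comap (fun ω => (V ω, X₂ ω)) inferInstance)
      (Measurable.comap_le (hVm.prodMk hX₂m)) ε₀ X₁ μ)
    (β₀ β₁ : ℝ) (Y : Ω → ℝ) (hY : ∀ ω, Y ω = β₀ + β₁ * X₁ ω + ε₀ ω + ε₁ ω + ε₂ ω) :
    μ[Y | MeasurableSpace.comap (fun ω => (X₁ ω, X₂ ω, V ω)) inferInstance] =ᵐ[μ]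
      fun ω => β₀ + β₁ * X₁ ω
        + (μ[ε₁ | MeasurableSpace.comap V inferInstance]) ω
        + (μ[ε₂ | MeasurableSpace.comap X₂ inferInstance]) ω
        + (μ[ε₀ | MeasurableSpace.comap (fun ω' => (V ω', X₂ ω')) inferInstance]) ω := by
  set m := MeasurableSpace.comap (fun ω => (X₁ ω, X₂ ω, V ω)) inferInstance with hm
  have h₁ : μ[ε₁ | m] =ᵐ[μ] μ[ε₁ | MeasurableSpace.comap V inferInstance] := by
    convert condExp_sup_comap_ae_eq_of_condIndepFun
      hVm (hX₁m.prodMk hX₂m) hε₁m hε₁int hCI₁ using 2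
    simp only [hm, comap_prodMk_eq_sup]; ac_rfl
  have h₂ : μ[ε₂ | m] =ᵐ[μ] μ[ε₂ | MeasurableSpace.comap X₂ inferInstance] := by
    convert condExp_sup_comap_ae_eq_of_condIndepFun
      hX₂m (hX₁m.prodMk hVm) hε₂m hε₂int hCI₂ using 2
    simp only [hm, comap_prodMk_eq_sup]; ac_rfl
  have h₀ : μ[ε₀ | m] =ᵐ[μ]
      μ[ε₀ | MeasurableSpace.comap (fun ω => (V ω, X₂ ω)) inferInstance] := by
    convert condExp_sup_comap_ae_eq_of_condIndepFun
      (hVm.prodMk hX₂m) hX₁m hε₀m hε₀int hCI₀ using 2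
    simp only [hm, comap_prodMk_eq_sup]; ac_rfl
  have hlin_int : Integrable (fun ω => β₀ + β₁ * X₁ ω) μ :=
    (integrable_const β₀).add (hX₁int.const_mul β₁)
  have hlin : μ[fun ω => β₀ + β₁ * X₁ ω | m] = fun ω => β₀ + β₁ * X₁ ω := by
    have hX₁ : Measurable[m] X₁ := measurable_fst.comp (Measurable.of_comap_le le_rfl)
    exact condExp_of_stronglyMeasurable (hX₁m.prodMk (hX₂m.prodMk hVm)).comap_le
      (measurable_const.add (hX₁.const_mul β₁)).stronglyMeasurable hlin_int
  rw [show Y = (fun ω => β₀ + β₁ * X₁ ω) + ε₀ + ε₁ + ε₂ from funext hY]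
  filter_upwards [condExp_add ((hlin_int.add hε₀int).add hε₁int) hε₂int m,
    condExp_add (hlin_int.add hε₀int) hε₁int m, condExp_add hlin_int hε₀int m, h₀, h₁, h₂]
    with ω e₃ e₂ e₁ h₀ω h₁ω h₂ω
  simp only [Pi.add_apply] at e₁ e₂ e₃ ⊢
  rw [e₃, e₂, e₁, hlin, h₀ω, h₁ω, h₂ω]
  ring

/-- Regression identity underlying Theorem 2 part 1 (complex scenario): under the conditional
independences implied by the causal diagram of Figure 4, with `Y = β₀ + β₁·X₁ + ε₀ + ε₁ + ε₂`,
`E[Y | σ(X₁, X₂, V)] = β₀ + β₁·X₁ + E[ε₁ | σ(V)] + E[ε₂ | σ(X₂)] + E[ε₀ | σ(V, X₂)]` a.s. -/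
theorem stmt_10 {Ω : Type*} {mΩ : MeasurableSpace Ω} [StandardBorelSpace Ω]
    (μ : Measure Ω) [IsProbabilityMeasure μ] {d : ℕ}
    (X₁ X₂ : Ω → ℝ) (V : Ω → (Fin d → ℝ)) (ε₀ ε₁ ε₂ : Ω → ℝ)
    (hX₁m : Measurable X₁) (hX₂m : Measurable X₂) (hVm : Measurable V)
    (hε₀m : Measurable ε₀) (hε₁m : Measurable ε₁) (hε₂m : Measurable ε₂)
    (hX₁int : Integrable X₁ μ) (hX₂int : Integrable X₂ μ)
    (hε₀int : Integrable ε₀ μ) (hε₁int : Integrable ε₁ μ) (hε₂int : Integrable ε₂ μ)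
    (hCI₁ : CondIndepFun (MeasurableSpace.comap V inferInstance) hVm.comap_le
      ε₁ (fun ω => (X₁ ω, X₂ ω)) μ)
    (hCI₂ : CondIndepFun (MeasurableSpace.comap X₂ inferInstance) hX₂m.comap_le
      ε₂ (fun ω => (X₁ ω, V ω)) μ)
    (hCI₀ : CondIndepFun
      (MeasurableSpace.comap (fun ω => (V ω, X₂ ω)) inferInstance)
      (Measurable.comap_le (hVm.prodMk hX₂m)) ε₀ X₁ μ)
    (β₀ β₁ : ℝ) (Y : Ω → ℝ) (hY : ∀ ω, Y ω = β₀ + β₁ * X₁ ω + ε₀ ω + ε₁ ω + ε₂ ω) :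
    μ[Y | MeasurableSpace.comap (fun ω => (X₁ ω, X₂ ω, V ω)) inferInstance] =ᵐ[μ]
      fun ω => β₀ + β₁ * X₁ ω
        + (μ[ε₁ | MeasurableSpace.comap V inferInstance]) ω
        + (μ[ε₂ | MeasurableSpace.comap X₂ inferInstance]) ω
        + (μ[ε₀ | MeasurableSpace.comap (fun ω' => (V ω', X₂ ω')) inferInstance]) ω :=
  stmt_10_general (mΩ := mΩ) μ X₁ X₂ V ε₀ ε₁ ε₂ hX₁m hX₂m hVm hε₀m hε₁m hε₂m hX₁int hε₀int hε₁int
    hε₂int hCI₁ hCI₂ hCI₀ β₀ β₁ Y hY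
end

section
/- (Theorem 2, part 1, identification form.) Let (Ω, F, P) be a probability space on a standard Borel space, let X₁ and X₂ be real-valued integrable random variables, V an ℝᵈ-valued random variable, and ε₀, ε₁, ε₂ integrable real-valued random variables. Assume: ε₁ is conditionally independent of the pair (X₁, X₂) given σ(V); ε₂ is conditionally independent of the pair (X₁, V) given σ(X₂); and ε₀ is conditionally independent of X₁ given σ(V, X₂). Let Y = β₀ + β₁·X₁ + ε₀ + ε₁ + ε₂ for real constants β₀, β₁. Suppose X₁ is not almost surely equal to h(X₂, V) for any Borel-measurable function h : ℝ × ℝᵈ → ℝ. Then β₁ is identified: for any real constants β₀', β₁' and any Borel-measurable g : ℝᵈ × ℝ → ℝ such that E[Y | σ(X₁, X₂, V)] = β₀' + β₁'·X₁ + g(V, X₂) almost surely, necessarily β₁' = β₁. -/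
/-!
The conditional independences let conditioning on `σ(X₁, X₂, V)` reduce each error term to a
function of its own conditioning variables: `E[ε₀ | X₁, X₂, V] = φ₀(V, X₂)`,
`E[ε₁ | X₁, X₂, V] = φ₁(V)` and `E[ε₂ | X₁, X₂, V] = φ₂(X₂)`, where `φᵢ` is the mean of the
conditional distribution of `εᵢ` given those variables. Hence `E[Y | X₁, X₂, V]` is
`β₀ + β₁ X₁ + G(X₂, V)` with `G` measurable; if a second representation had `β₁' ≠ β₁`,
subtracting the two would exhibit `X₁` as a measurable function of `(X₂, V)`.
-/

open MeasureTheory ProbabilityTheory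

namespace ProbabilityTheory

variable {Ω γ δ F : Type*} {mΩ : MeasurableSpace Ω} {μ : Measure Ω}

theorem exists_condExp_prodMk_ae_eq_comp_of_condIndepFun [StandardBorelSpace Ω]
    [IsFiniteMeasure μ] {mγ : MeasurableSpace γ} [MeasurableSpace δ] [StandardBorelSpace δ]
    [Nonempty δ] [NormedAddCommGroup F] [NormedSpace ℝ F] [CompleteSpace F] [MeasurableSpace F]
    [BorelSpace F] [SecondCountableTopology F] {Y : Ω → F} {X : Ω → γ} {Z : Ω → δ}
    (hY : Measurable Y) (hX : Measurable X) (hZ : Measurable Z)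
    (hYZ : CondIndepFun (mγ.comap X) hX.comap_le Y Z μ) (hY_int : Integrable Y μ) :
    ∃ φ : γ → F, Measurable φ ∧
      μ[Y | MeasurableSpace.comap (fun ω => (X ω, Z ω)) inferInstance] =ᵐ[μ] fun ω => φ (X ω) := by
  refine ⟨fun x => ∫ y, y ∂condDistrib Y X μ x,
    stronglyMeasurable_id.integral_kernel.measurable, ?_⟩
  have hkernel := (condIndepFun_iff_condDistrib_prod_ae_eq_prodMkRight hY hZ hX).mp hYZ.symm
  filter_upwards [condExp_ae_eq_integral_condDistrib' (hX.prodMk hZ) hY_int,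
    ae_of_ae_map (hX.prodMk hZ).aemeasurable hkernel] with ω hω hκ
  rw [hω, hκ, Kernel.prodMkRight_apply]

theorem eq_of_ae_mul_add_comp_eq {α : Type*} [MeasurableSpace α] {X : Ω → ℝ} {W : Ω → α}
    (hX : ¬ ∃ h : α → ℝ, Measurable h ∧ X =ᵐ[μ] fun ω => h (W ω)) {b b' : ℝ} {G G' : α → ℝ}
    (hG : Measurable G) (hG' : Measurable G')
    (h : ∀ᵐ ω ∂μ, b * X ω + G (W ω) = b' * X ω + G' (W ω)) : b = b' := by
  by_contra hne
  refine hX ⟨fun w => (G' w - G w) / (b - b'), (hG'.sub hG).div_const _, ?_⟩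
  filter_upwards [h] with ω hω
  rw [eq_div_iff (sub_ne_zero.mpr hne)]
  linarith

end ProbabilityTheory

theorem stmt_11_general {Ω : Type*} {mΩ : MeasurableSpace Ω} [StandardBorelSpace Ω]
    (μ : Measure Ω) [IsProbabilityMeasure μ] {d : ℕ}
    (X₁ X₂ : Ω → ℝ) (V : Ω → (Fin d → ℝ)) (ε₀ ε₁ ε₂ : Ω → ℝ)
    (hX₁m : Measurable X₁) (hX₂m : Measurable X₂) (hVm : Measurable V)
    (hε₀m : Measurable ε₀) (hε₁m : Measurable ε₁) (hε₂m : Measurable ε₂)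
    (hX₁int : Integrable X₁ μ)
    (hε₀int : Integrable ε₀ μ) (hε₁int : Integrable ε₁ μ) (hε₂int : Integrable ε₂ μ)
    (hCI₁ : CondIndepFun (MeasurableSpace.comap V inferInstance) hVm.comap_le
      ε₁ (fun ω => (X₁ ω, X₂ ω)) μ)
    (hCI₂ : CondIndepFun (MeasurableSpace.comap X₂ inferInstance) hX₂m.comap_le
      ε₂ (fun ω => (X₁ ω, V ω)) μ)
    (hCI₀ : CondIndepFun
      (MeasurableSpace.comap (fun ω => (V ω, X₂ ω)) inferInstance)
      (Measurable.comap_le (hVm.prodMk hX₂m)) ε₀ X₁ μ)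
    (β₀ β₁ : ℝ) (Y : Ω → ℝ) (hY : ∀ ω, Y ω = β₀ + β₁ * X₁ ω + ε₀ ω + ε₁ ω + ε₂ ω)
    (hnot : ¬ ∃ h : ℝ × (Fin d → ℝ) → ℝ, Measurable h ∧ X₁ =ᵐ[μ] fun ω => h (X₂ ω, V ω)) :
    ∀ (β₀' β₁' : ℝ) (g : (Fin d → ℝ) × ℝ → ℝ), Measurable g →
      (μ[Y | MeasurableSpace.comap (fun ω => (X₁ ω, X₂ ω, V ω)) inferInstance] =ᵐ[μ]
        fun ω => β₀' + β₁' * X₁ ω + g (V ω, X₂ ω)) →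
      β₁' = β₁ := by
  intro β₀' β₁' g hg hEq
  set 𝔪 := MeasurableSpace.comap (fun ω => (X₁ ω, X₂ ω, V ω)) inferInstance
  have h𝔪 : 𝔪 ≤ mΩ := (hX₁m.prodMk (hX₂m.prodMk hVm)).comap_le
  obtain ⟨φ₀, hφ₀, h₀⟩ : ∃ φ₀ : (Fin d → ℝ) × ℝ → ℝ, Measurable φ₀ ∧
      μ[ε₀ | 𝔪] =ᵐ[μ] fun ω => φ₀ (V ω, X₂ ω) := by
    convert exists_condExp_prodMk_ae_eq_comp_of_condIndepFun hε₀m (hVm.prodMk hX₂m) hX₁m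
      hCI₀ hε₀int using 5
    simp only [𝔪, inferInstance, Prod.instMeasurableSpace, MeasurableSpace.comap_prodMk]; ac_rfl
  obtain ⟨φ₁, hφ₁, h₁⟩ : ∃ φ₁ : (Fin d → ℝ) → ℝ, Measurable φ₁ ∧
      μ[ε₁ | 𝔪] =ᵐ[μ] fun ω => φ₁ (V ω) := by
    convert exists_condExp_prodMk_ae_eq_comp_of_condIndepFun hε₁m hVm (hX₁m.prodMk hX₂m)
      hCI₁ hε₁int using 5
    simp only [𝔪, inferInstance, Prod.instMeasurableSpace, MeasurableSpace.comap_prodMk]; ac_rfl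
  obtain ⟨φ₂, hφ₂, h₂⟩ : ∃ φ₂ : ℝ → ℝ, Measurable φ₂ ∧
      μ[ε₂ | 𝔪] =ᵐ[μ] fun ω => φ₂ (X₂ ω) := by
    convert exists_condExp_prodMk_ae_eq_comp_of_condIndepFun hε₂m hX₂m (hX₁m.prodMk hVm)
      hCI₂ hε₂int using 5
    simp only [𝔪, inferInstance, Prod.instMeasurableSpace, MeasurableSpace.comap_prodMk]; ac_rfl
  have hlin_int : Integrable (fun ω => β₀ + β₁ * X₁ ω) μ :=
    (integrable_const β₀).add (hX₁int.const_mul β₁)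
  have hlin : μ[fun ω => β₀ + β₁ * X₁ ω | 𝔪] = fun ω => β₀ + β₁ * X₁ ω := by
    refine condExp_of_stronglyMeasurable h𝔪 ?_ hlin_int
    have hX₁𝔪 : Measurable[𝔪] X₁ := measurable_fst.comp (Measurable.of_comap_le le_rfl)
    exact ((hX₁𝔪.const_mul β₁).const_add β₀).stronglyMeasurable
  obtain rfl : Y = (fun ω => β₀ + β₁ * X₁ ω) + ε₀ + ε₁ + ε₂ := funext hY
  refine eq_of_ae_mul_add_comp_eq hnot (G := fun p => β₀' + g (p.2, p.1))
    (G' := fun p => β₀ + φ₀ (p.2, p.1) + φ₁ p.2 + φ₂ p.1)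
    (by fun_prop) (by fun_prop) ?_
  filter_upwards [hEq, condExp_add ((hlin_int.add hε₀int).add hε₁int) hε₂int 𝔪,
    condExp_add (hlin_int.add hε₀int) hε₁int 𝔪, condExp_add hlin_int hε₀int 𝔪, h₀, h₁, h₂]
    with ω hω e₁ e₂ e₃ f₀ f₁ f₂
  simp only [Pi.add_apply, hlin] at hω e₁ e₂ e₃
  linarith

/-- Theorem 2 part 1 (identification form): in the complex scenario, under the conditional
independences implied by the causal diagram of Figure 4, with `Y = β₀ + β₁·X₁ + ε₀ + ε₁ + ε₂`
and `X₁` not almost surely a Borel-measurable function of `(X₂, V)`, the search ad ROAS `β₁`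
is identified: any representation `E[Y | σ(X₁, X₂, V)] = β₀' + β₁'·X₁ + g(V, X₂)` a.s.
forces `β₁' = β₁`. -/
theorem stmt_11 {Ω : Type*} {mΩ : MeasurableSpace Ω} [StandardBorelSpace Ω]
    (μ : Measure Ω) [IsProbabilityMeasure μ] {d : ℕ}
    (X₁ X₂ : Ω → ℝ) (V : Ω → (Fin d → ℝ)) (ε₀ ε₁ ε₂ : Ω → ℝ)
    (hX₁m : Measurable X₁) (hX₂m : Measurable X₂) (hVm : Measurable V)
    (hε₀m : Measurable ε₀) (hε₁m : Measurable ε₁) (hε₂m : Measurable ε₂)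
    (hX₁int : Integrable X₁ μ) (hX₂int : Integrable X₂ μ)
    (hε₀int : Integrable ε₀ μ) (hε₁int : Integrable ε₁ μ) (hε₂int : Integrable ε₂ μ)
    (hCI₁ : CondIndepFun (MeasurableSpace.comap V inferInstance) hVm.comap_le
      ε₁ (fun ω => (X₁ ω, X₂ ω)) μ)
    (hCI₂ : CondIndepFun (MeasurableSpace.comap X₂ inferInstance) hX₂m.comap_le
      ε₂ (fun ω => (X₁ ω, V ω)) μ)
    (hCI₀ : CondIndepFun
      (MeasurableSpace.comap (fun ω => (V ω, X₂ ω)) inferInstance)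
      (Measurable.comap_le (hVm.prodMk hX₂m)) ε₀ X₁ μ)
    (β₀ β₁ : ℝ) (Y : Ω → ℝ) (hY : ∀ ω, Y ω = β₀ + β₁ * X₁ ω + ε₀ ω + ε₁ ω + ε₂ ω)
    (hnot : ¬ ∃ h : ℝ × (Fin d → ℝ) → ℝ, Measurable h ∧ X₁ =ᵐ[μ] fun ω => h (X₂ ω, V ω)) :
    ∀ (β₀' β₁' : ℝ) (g : (Fin d → ℝ) × ℝ → ℝ), Measurable g →
      (μ[Y | MeasurableSpace.comap (fun ω => (X₁ ω, X₂ ω, V ω)) inferInstance] =ᵐ[μ]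
        fun ω => β₀' + β₁' * X₁ ω + g (V ω, X₂ ω)) →
      β₁' = β₁ :=
  stmt_11_general (mΩ := mΩ) μ X₁ X₂ V ε₀ ε₁ ε₂ hX₁m hX₂m hVm hε₀m hε₁m hε₂m hX₁int hε₀int hε₁int
    hε₂int hCI₁ hCI₂ hCI₀ β₀ β₁ Y hY hnot
end
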